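/- Under the saturated marginal structural model setup, assume λ₀ is strictly positive on a set of positive Lebesgue measure and that β is bounded, and let β* ∈ ℝ satisfy h(β*) = 0. Then β* is a weighted time-average of β(·): there exists a measurable ω : [0,τ] → [0,∞) with 0 < ∫₀^τ ω(t)dt < ∞ such that β* · ∫₀^τ ω(t)dt = ∫₀^τ ω(t)β(t)dt; one may take ω(t) = (f₀(t)+f₁(t)) · ∫₀¹ v(β* + s(β(t)−β*), t) ds, where v(b,t) = e^b S₀(t)S₁(t)/(S₀(t)+e^b S₁(t))². -/

import Mathlib

open MeasureTheory Filter

/-- Potential-outcome survival function `S_a(t) = exp(-∫₀ᵗ e^{β(u)·a} λ₀(u) du)`. -/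
noncomputable def Ssurv (lam0 bet : ℝ → ℝ) (a t : ℝ) : ℝ :=
  Real.exp (-(∫ u in (0:ℝ)..t, Real.exp (bet u * a) * lam0 u))

/-- Potential-outcome density `f_a(t) = e^{β(t)·a} λ₀(t) S_a(t)`. -/
noncomputable def fdens (lam0 bet : ℝ → ℝ) (a t : ℝ) : ℝ :=
  Real.exp (bet t * a) * lam0 t * Ssurv lam0 bet a t

/-- `ℰ(b,t) = e^b S₁(t) / (S₀(t) + e^b S₁(t))`. -/
noncomputable def Efun (lam0 bet : ℝ → ℝ) (b t : ℝ) : ℝ :=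
  Real.exp b * Ssurv lam0 bet 1 t /
    (Ssurv lam0 bet 0 t + Real.exp b * Ssurv lam0 bet 1 t)

/-- Population full-data estimating function
`h(b) = ∫₀^τ (ℰ(β(t),t) - ℰ(b,t)) (f₀(t) + f₁(t)) dt`. -/
noncomputable def hfun (τ : ℝ) (lam0 bet : ℝ → ℝ) (b : ℝ) : ℝ :=
  ∫ t in (0:ℝ)..τ,
    (Efun lam0 bet (bet t) t - Efun lam0 bet b t) *
      (fdens lam0 bet 0 t + fdens lam0 bet 1 t)

/-! Since `∂ℰ/∂b = v`, the fundamental theorem of calculus along the segment from `β*` to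
`β(t)` gives `ℰ(β(t),t) - ℰ(β*,t) = (β(t) - β*) ∫₀¹ v(β* + s(β(t) - β*), t) ds`, so
`h(β*) = ∫₀^τ (β(t) - β*) ω(t) dt` and the root equation is the claimed identity. The weight
is positive wherever `λ₀` is, `v ≤ 1/4` bounds it by the integrable `(f₀ + f₁)/4`, and
`0 ≤ ℰ ≤ 1` bounds `|β - β*| ω` by `f₀ + f₁`. -/

open Set

lemma sub_eq_mul_integral_deriv_segment {f f' : ℝ → ℝ} (hf : ∀ x, HasDerivAt f (f' x) x)
    (hf' : Continuous f') (a b : ℝ) :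
    f b - f a = (b - a) * ∫ s in (0:ℝ)..1, f' (a + s * (b - a)) := by
  have hderiv : ∀ s ∈ uIcc (0:ℝ) 1,
      HasDerivAt (fun s => f (a + s * (b - a))) ((b - a) * f' (a + s * (b - a))) s := by
    intro s _
    rw [mul_comm]
    exact (hf _).comp s ((hasDerivAt_mul_const (b - a)).const_add a)
  have hint : IntervalIntegrable (fun s => (b - a) * f' (a + s * (b - a))) volume 0 1 :=
    (by fun_prop : Continuous _).intervalIntegrable 0 1
  rw [← intervalIntegral.integral_const_mul,
    intervalIntegral.integral_eq_sub_of_hasDerivAt hderiv hint]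
  simp

lemma measurable_intervalIntegral_of_uncurry {α : Type*} [MeasurableSpace α] {F : α → ℝ → ℝ}
    (hF : Measurable (Function.uncurry F)) (a b : ℝ) :
    Measurable fun x => ∫ s in a..b, F x s :=
  (hF.stronglyMeasurable.integral_prod_right (ν := volume.restrict (Ioc a b))).measurable.sub
    (hF.stronglyMeasurable.integral_prod_right (ν := volume.restrict (Ioc b a))).measurable

lemma measurable_primitive {g : ℝ → ℝ} (hg : Measurable g) :
    Measurable fun t => ∫ u in (0:ℝ)..t, g u := by
  have hscaled :
      (fun t => ∫ u in (0:ℝ)..t, g u) = fun t => t * ∫ s in (0:ℝ)..1, g (t * s) := by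
    funext t
    rw [intervalIntegral.mul_integral_comp_mul_left, mul_zero, mul_one]
  rw [hscaled]
  exact measurable_id.mul <| measurable_intervalIntegral_of_uncurry
    (F := fun t s => g (t * s)) (hg.comp (measurable_fst.mul measurable_snd)) 0 1

lemma lt_of_volume_pos_of_subset_Icc {s : Set ℝ} {a b : ℝ} (hs : 0 < volume s)
    (hsub : s ⊆ Icc a b) : a < b := by
  have := hs.trans_le (measure_mono hsub)
  rw [Real.volume_Icc, ENNReal.ofReal_pos] at this
  linarith

section Survival

variable {lam0 bet : ℝ → ℝ}

lemma Ssurv_pos (a t : ℝ) : 0 < Ssurv lam0 bet a t := Real.exp_pos _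

lemma Ssurv_le_one (hlam : ∀ t, 0 ≤ lam0 t) (a : ℝ) {t : ℝ} (ht : 0 ≤ t) :
    Ssurv lam0 bet a t ≤ 1 := by
  rw [Ssurv, Real.exp_le_one_iff, neg_nonpos]
  exact intervalIntegral.integral_nonneg ht fun u _ => mul_nonneg (Real.exp_pos _).le (hlam u)

lemma fdens_nonneg (hlam : ∀ t, 0 ≤ lam0 t) (a t : ℝ) : 0 ≤ fdens lam0 bet a t :=
  mul_nonneg (mul_nonneg (Real.exp_pos _).le (hlam t)) (Ssurv_pos a t).le

lemma fdens_add_nonneg (hlam : ∀ t, 0 ≤ lam0 t) (t : ℝ) :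
    0 ≤ fdens lam0 bet 0 t + fdens lam0 bet 1 t :=
  add_nonneg (fdens_nonneg hlam 0 t) (fdens_nonneg hlam 1 t)

lemma fdens_le (hlam : ∀ t, 0 ≤ lam0 t) (a : ℝ) {t : ℝ} (ht : 0 ≤ t) :
    fdens lam0 bet a t ≤ Real.exp (bet t * a) * lam0 t :=
  mul_le_of_le_one_right (mul_nonneg (Real.exp_pos _).le (hlam t)) (Ssurv_le_one hlam a ht)

lemma measurable_Ssurv (hlam_meas : Measurable lam0) (hbet_meas : Measurable bet) (a : ℝ) :
    Measurable (Ssurv lam0 bet a) :=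
  (measurable_primitive ((hbet_meas.mul_const a).exp.mul hlam_meas)).neg.exp

lemma measurable_fdens (hlam_meas : Measurable lam0) (hbet_meas : Measurable bet) (a : ℝ) :
    Measurable (fdens lam0 bet a) :=
  ((hbet_meas.mul_const a).exp.mul hlam_meas).mul (measurable_Ssurv hlam_meas hbet_meas a)

lemma integrableOn_fdens_add (hlam_meas : Measurable lam0) (hbet_meas : Measurable bet)
    (hlam : ∀ t, 0 ≤ lam0 t) {τ : ℝ} (hlam_int : IntegrableOn lam0 (Icc 0 τ))
    (hbetlam_int : IntegrableOn (fun t => Real.exp (bet t) * lam0 t) (Icc 0 τ)) :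
    IntegrableOn (fun t => fdens lam0 bet 0 t + fdens lam0 bet 1 t) (Icc 0 τ) := by
  refine (hlam_int.add hbetlam_int).mono'
    ((measurable_fdens hlam_meas hbet_meas 0).add
      (measurable_fdens hlam_meas hbet_meas 1)).aestronglyMeasurable ?_
  refine (ae_restrict_iff' measurableSet_Icc).mpr (ae_of_all _ fun t ht => ?_)
  rw [Real.norm_of_nonneg (fdens_add_nonneg hlam t)]
  have h0 := fdens_le (bet := bet) hlam 0 ht.1
  have h1 := fdens_le (bet := bet) hlam 1 ht.1
  simp only [mul_zero, Real.exp_zero, one_mul, mul_one] at h0 h1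
  exact add_le_add h0 h1

end Survival

section Weight

variable {lam0 bet : ℝ → ℝ}

noncomputable def vfun (lam0 bet : ℝ → ℝ) (b t : ℝ) : ℝ :=
  Real.exp b * Ssurv lam0 bet 0 t * Ssurv lam0 bet 1 t /
    (Ssurv lam0 bet 0 t + Real.exp b * Ssurv lam0 bet 1 t) ^ 2

lemma hasDerivAt_Efun (b t : ℝ) :
    HasDerivAt (fun b => Efun lam0 bet b t) (vfun lam0 bet b t) b := by
  have hS0 : 0 < Ssurv lam0 bet 0 t := Ssurv_pos 0 t
  have hS1 : 0 < Ssurv lam0 bet 1 t := Ssurv_pos 1 t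
  have hnum := (Real.hasDerivAt_exp b).mul_const (Ssurv lam0 bet 1 t)
  refine (hnum.div (hnum.const_add (Ssurv lam0 bet 0 t)) (by positivity)).congr_deriv ?_
  rw [vfun]
  ring

lemma continuous_vfun (t : ℝ) : Continuous fun b => vfun lam0 bet b t := by
  have hS0 : 0 < Ssurv lam0 bet 0 t := Ssurv_pos 0 t
  have hS1 : 0 < Ssurv lam0 bet 1 t := Ssurv_pos 1 t
  unfold vfun
  exact Continuous.div (by fun_prop) (by fun_prop) fun b => by positivity

lemma vfun_pos (b t : ℝ) : 0 < vfun lam0 bet b t := by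
  have hS0 : 0 < Ssurv lam0 bet 0 t := Ssurv_pos 0 t
  have hS1 : 0 < Ssurv lam0 bet 1 t := Ssurv_pos 1 t
  unfold vfun
  positivity

lemma vfun_le_quarter (b t : ℝ) : vfun lam0 bet b t ≤ 1 / 4 := by
  have hS0 : 0 < Ssurv lam0 bet 0 t := Ssurv_pos 0 t
  have hS1 : 0 < Ssurv lam0 bet 1 t := Ssurv_pos 1 t
  rw [vfun, div_le_iff₀ (by positivity)]
  nlinarith [sq_nonneg (Ssurv lam0 bet 0 t - Real.exp b * Ssurv lam0 bet 1 t), Real.exp_pos b]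

lemma abs_Efun_sub_Efun_le_one (b b' t : ℝ) :
    |Efun lam0 bet b t - Efun lam0 bet b' t| ≤ 1 := by
  have hS0 : 0 < Ssurv lam0 bet 0 t := Ssurv_pos 0 t
  have hS1 : 0 < Ssurv lam0 bet 1 t := Ssurv_pos 1 t
  have hE : ∀ b, 0 ≤ Efun lam0 bet b t ∧ Efun lam0 bet b t ≤ 1 := fun b =>
    ⟨by unfold Efun; positivity, by rw [Efun, div_le_one (by positivity)]; linarith⟩
  rw [abs_le]
  constructor <;> linarith [hE b, hE b']

lemma intervalIntegrable_vfun_segment (b b' t : ℝ) :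
    IntervalIntegrable (fun s => vfun lam0 bet (b + s * (b' - b)) t) volume 0 1 :=
  ((continuous_vfun t).comp (by fun_prop)).intervalIntegrable 0 1

noncomputable def weight (lam0 bet : ℝ → ℝ) (b t : ℝ) : ℝ :=
  (fdens lam0 bet 0 t + fdens lam0 bet 1 t) *
    ∫ s in (0:ℝ)..1, vfun lam0 bet (b + s * (bet t - b)) t

lemma Efun_sub_mul_eq_weight (b t : ℝ) :
    (Efun lam0 bet (bet t) t - Efun lam0 bet b t) * (fdens lam0 bet 0 t + fdens lam0 bet 1 t) =
      (bet t - b) * weight lam0 bet b t := by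
  rw [sub_eq_mul_integral_deriv_segment (fun b => hasDerivAt_Efun b t) (continuous_vfun t),
    weight]
  ring

lemma hfun_eq_integral_weight (τ b : ℝ) :
    hfun τ lam0 bet b = ∫ t in (0:ℝ)..τ, (bet t - b) * weight lam0 bet b t :=
  intervalIntegral.integral_congr fun t _ => Efun_sub_mul_eq_weight b t

lemma weight_nonneg (hlam : ∀ t, 0 ≤ lam0 t) (b t : ℝ) : 0 ≤ weight lam0 bet b t :=
  mul_nonneg (fdens_add_nonneg hlam t)
    (intervalIntegral.integral_nonneg zero_le_one fun _ _ => (vfun_pos _ t).le)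

lemma weight_pos (hlam : ∀ t, 0 ≤ lam0 t) (b : ℝ) {t : ℝ} (ht : 0 < lam0 t) :
    0 < weight lam0 bet b t := by
  have hf0 : 0 < fdens lam0 bet 0 t := mul_pos (mul_pos (Real.exp_pos _) ht) (Ssurv_pos 0 t)
  refine mul_pos (add_pos_of_pos_of_nonneg hf0 (fdens_nonneg hlam 1 t)) ?_
  exact intervalIntegral.intervalIntegral_pos_of_pos_on
    (intervalIntegrable_vfun_segment b (bet t) t) (fun _ _ => vfun_pos _ t)
    zero_lt_one

lemma weight_le (hlam : ∀ t, 0 ≤ lam0 t) (b t : ℝ) :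
    weight lam0 bet b t ≤ (fdens lam0 bet 0 t + fdens lam0 bet 1 t) / 4 := by
  have hint : ∫ s in (0:ℝ)..1, vfun lam0 bet (b + s * (bet t - b)) t ≤ 1 / 4 := by
    calc _ ≤ ∫ _ in (0:ℝ)..1, (1 / 4 : ℝ) :=
          intervalIntegral.integral_mono_on zero_le_one
            (intervalIntegrable_vfun_segment b (bet t) t) intervalIntegrable_const
            fun _ _ => vfun_le_quarter _ t
      _ = 1 / 4 := by simp
  rw [weight, div_eq_mul_one_div]
  exact mul_le_mul_of_nonneg_left hint (fdens_add_nonneg hlam t)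

lemma measurable_weight (hlam_meas : Measurable lam0) (hbet_meas : Measurable bet) (b : ℝ) :
    Measurable (weight lam0 bet b) := by
  have hS0 := measurable_Ssurv hlam_meas hbet_meas 0
  have hS1 := measurable_Ssurv hlam_meas hbet_meas 1
  refine ((measurable_fdens hlam_meas hbet_meas 0).add
    (measurable_fdens hlam_meas hbet_meas 1)).mul
      (measurable_intervalIntegral_of_uncurry
        (F := fun t s => vfun lam0 bet (b + s * (bet t - b)) t) ?_ 0 1)
  simp only [Function.uncurry_def, vfun]
  fun_prop

end Weight

section Integrability

variable {lam0 bet : ℝ → ℝ} {τ : ℝ}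
  (hlam_meas : Measurable lam0) (hbet_meas : Measurable bet) (hlam : ∀ t, 0 ≤ lam0 t)
  (hlam_int : IntegrableOn lam0 (Icc 0 τ))
  (hbetlam_int : IntegrableOn (fun t => Real.exp (bet t) * lam0 t) (Icc 0 τ))
include hlam_meas hbet_meas hlam hlam_int hbetlam_int

lemma integrableOn_weight (b : ℝ) : IntegrableOn (weight lam0 bet b) (Icc 0 τ) := by
  have hf := integrableOn_fdens_add hlam_meas hbet_meas hlam hlam_int hbetlam_int
  refine (hf.div_const 4).mono' (measurable_weight hlam_meas hbet_meas b).aestronglyMeasurable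
    (ae_of_all _ fun t => ?_)
  rw [Real.norm_of_nonneg (weight_nonneg hlam b t)]
  exact weight_le hlam b t

lemma integrableOn_sub_mul_weight (b : ℝ) :
    IntegrableOn (fun t => (bet t - b) * weight lam0 bet b t) (Icc 0 τ) := by
  refine (integrableOn_fdens_add hlam_meas hbet_meas hlam hlam_int hbetlam_int).mono'
    ((hbet_meas.sub_const b).mul (measurable_weight hlam_meas hbet_meas b)).aestronglyMeasurable
    (ae_of_all _ fun t => ?_)
  rw [← Efun_sub_mul_eq_weight, norm_mul, Real.norm_eq_abs,
    Real.norm_of_nonneg (fdens_add_nonneg hlam t)]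
  exact mul_le_of_le_one_left (fdens_add_nonneg hlam t) (abs_Efun_sub_Efun_le_one _ _ t)

lemma integral_weight_pos (hpos : 0 < volume {t | t ∈ Icc 0 τ ∧ 0 < lam0 t}) (b : ℝ) :
    0 < ∫ t in (0:ℝ)..τ, weight lam0 bet b t := by
  have hτ : 0 ≤ τ := (lt_of_volume_pos_of_subset_Icc hpos fun _ ht => ht.1).le
  rw [intervalIntegral.integral_of_le hτ, ← integral_Icc_eq_integral_Ioc,
    setIntegral_pos_iff_support_of_nonneg_ae (ae_of_all _ (weight_nonneg hlam b))
      (integrableOn_weight hlam_meas hbet_meas hlam hlam_int hbetlam_int b)]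
  exact hpos.trans_le <| measure_mono fun t ⟨ht, hlt⟩ => ⟨(weight_pos hlam b hlt).ne', ht⟩

end Integrability

theorem beta_star_is_weighted_time_average_general
    (τ : ℝ) (lam0 bet : ℝ → ℝ) (bstar : ℝ)
    (hlam_meas : Measurable lam0) (hbet_meas : Measurable bet)
    (hlam_nonneg : ∀ t, 0 ≤ lam0 t)
    (hlam_int : IntegrableOn lam0 (Set.Icc 0 τ))
    (hbetlam_int : IntegrableOn (fun t => Real.exp (bet t) * lam0 t) (Set.Icc 0 τ))
    (hpos : 0 < volume {t | t ∈ Set.Icc 0 τ ∧ 0 < lam0 t})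
    (hroot : hfun τ lam0 bet bstar = 0) :
    ∃ ω : ℝ → ℝ, Measurable ω ∧ (∀ t, 0 ≤ ω t) ∧
      IntegrableOn ω (Set.Ioc 0 τ) ∧
      (0 < ∫ t in (0:ℝ)..τ, ω t) ∧
      (bstar * ∫ t in (0:ℝ)..τ, ω t) = (∫ t in (0:ℝ)..τ, ω t * bet t) ∧
      ω = fun t => (fdens lam0 bet 0 t + fdens lam0 bet 1 t) *
        ∫ s in (0:ℝ)..1,
          Real.exp (bstar + s * (bet t - bstar)) * Ssurv lam0 bet 0 t * Ssurv lam0 bet 1 t /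
            (Ssurv lam0 bet 0 t +
              Real.exp (bstar + s * (bet t - bstar)) * Ssurv lam0 bet 1 t) ^ 2 := by
  have hτ : 0 ≤ τ := (lt_of_volume_pos_of_subset_Icc hpos fun _ ht => ht.1).le
  have hω := integrableOn_weight hlam_meas hbet_meas hlam_nonneg hlam_int hbetlam_int bstar
  have hβω := integrableOn_sub_mul_weight hlam_meas hbet_meas hlam_nonneg hlam_int hbetlam_int bstar
  rw [← intervalIntegrable_iff_integrableOn_Icc_of_le hτ] at hβω
  refine ⟨weight lam0 bet bstar, measurable_weight hlam_meas hbet_meas bstar,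
    weight_nonneg hlam_nonneg bstar, hω.mono_set Ioc_subset_Icc_self,
    integral_weight_pos hlam_meas hbet_meas hlam_nonneg hlam_int hbetlam_int hpos bstar, ?_, rfl⟩
  rw [hfun_eq_integral_weight] at hroot
  calc bstar * ∫ t in (0:ℝ)..τ, weight lam0 bet bstar t
      = (∫ t in (0:ℝ)..τ, (bet t - bstar) * weight lam0 bet bstar t) +
          ∫ t in (0:ℝ)..τ, bstar * weight lam0 bet bstar t := by
        rw [hroot, zero_add, intervalIntegral.integral_const_mul]
    _ = ∫ t in (0:ℝ)..τ, weight lam0 bet bstar t * bet t := by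
        rw [← intervalIntegral.integral_add hβω
          (((intervalIntegrable_iff_integrableOn_Icc_of_le hτ).mpr hω).const_mul bstar)]
        exact intervalIntegral.integral_congr fun t _ => by ring

/-- The time-averaged log hazard ratio `β*` (a root of `h`) is a weighted time-average of
`β(·)`: there is a nonnegative measurable weight `ω` with `0 < ∫₀^τ ω < ∞` such that
`β* ∫₀^τ ω = ∫₀^τ ω β`, and one may take
`ω(t) = (f₀(t)+f₁(t)) ∫₀¹ v(β* + s(β(t)-β*), t) ds` with
`v(b,t) = e^b S₀(t) S₁(t)/(S₀(t)+e^b S₁(t))²`. -/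
theorem beta_star_is_weighted_time_average
    (τ : ℝ) (hτ : 0 < τ) (lam0 bet : ℝ → ℝ) (bstar : ℝ)
    (hlam_meas : Measurable lam0) (hbet_meas : Measurable bet)
    (hlam_nonneg : ∀ t, 0 ≤ lam0 t)
    (hlam_int : IntegrableOn lam0 (Set.Icc 0 τ))
    (hbetlam_int : IntegrableOn (fun t => Real.exp (bet t) * lam0 t) (Set.Icc 0 τ))
    (hpos : 0 < volume {t | t ∈ Set.Icc 0 τ ∧ 0 < lam0 t})
    (hbdd : ∃ K : ℝ, ∀ t, |bet t| ≤ K)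
    (hroot : hfun τ lam0 bet bstar = 0) :
    ∃ ω : ℝ → ℝ, Measurable ω ∧ (∀ t, 0 ≤ ω t) ∧
      IntegrableOn ω (Set.Ioc 0 τ) ∧
      (0 < ∫ t in (0:ℝ)..τ, ω t) ∧
      (bstar * ∫ t in (0:ℝ)..τ, ω t) = (∫ t in (0:ℝ)..τ, ω t * bet t) ∧
      ω = fun t => (fdens lam0 bet 0 t + fdens lam0 bet 1 t) *
        ∫ s in (0:ℝ)..1,
          Real.exp (bstar + s * (bet t - bstar)) * Ssurv lam0 bet 0 t * Ssurv lam0 bet 1 t /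
            (Ssurv lam0 bet 0 t +
              Real.exp (bstar + s * (bet t - bstar)) * Ssurv lam0 bet 1 t) ^ 2 :=
  beta_star_is_weighted_time_average_general τ lam0 bet bstar hlam_meas hbet_meas hlam_nonneg
    hlam_int hbetlam_int hpos hroot
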